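/- Let d be a positive integer and p a prime with p ∤ d. Then for every integer m with 0 ≤ m < d, ∑_{a=0}^{m} δ_∈(a) = #{1 ≤ i < m : i < d·{p·i/d} ≤ m}. -/

import Mathlib

open scoped Classical

/-- `{x}' := {x}` if the fractional part is nonzero, else `1`. -/
noncomputable def fract' (x : ℚ) : ℚ := if Int.fract x = 0 then 1 else Int.fract x

/-- `δ_∈(a) = 1` iff there is `i ≥ 1` with `p·i ≡ a (mod d)` and `i/d < {a/d}`. -/
noncomputable def deltaIn (d p a : ℕ) : ℤ :=
  if ∃ i : ℕ, 1 ≤ i ∧ p * i ≡ a [MOD d] ∧ (i : ℚ) / d < Int.fract ((a : ℚ) / d) then 1 else 0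

/-- `δ_<(a) = 1` iff `{a/d}' < {pa/d}'`. -/
noncomputable def deltaLt (d p a : ℕ) : ℤ :=
  if fract' ((a : ℚ) / d) < fract' (((p : ℚ) * a) / d) then 1 else 0

/-- `ϖ(a) = ⌈(p−1)a/d⌉ − δ_∈(a)`. -/
noncomputable def varpi (d p a : ℕ) : ℤ :=
  ⌈(((p : ℚ) - 1) * a) / d⌉ - deltaIn d p a

/-- The arithmetic polygon of `△ = [0, d]`: `p_△(m) = ∑_{a=0}^{m−1} ϖ(a)`. -/
noncomputable def pTri (d p m : ℕ) : ℤ := ∑ a ∈ Finset.range m, varpi d p a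

/-
For `a < d` we have `{a/d} = a/d`, so `δ_∈(a) = 1` exactly when `a = p·i mod d` for some
`1 ≤ i < a`; and `d·{p·i/d} = p·i mod d`. Since `p` is invertible modulo `d`, the map
`i ↦ p·i mod d` is injective on `[0, d)`, and it carries the set counted on the right bijectively
onto `{a ≤ m : δ_∈(a) = 1}`.
-/

open Finset

lemma natCast_mul_fract_div_natCast {k : Type*} [Field k] [LinearOrder k] [IsStrictOrderedRing k]
    [FloorRing k] {d : ℕ} (hd : d ≠ 0) (n : ℕ) :
    (d : k) * Int.fract ((n : k) / d) = (n % d : ℕ) := by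
  rw [Int.fract_div_natCast_eq_div_natCast_mod, mul_div_cancel₀ _ (Nat.cast_ne_zero.2 hd)]

lemma deltaIn_eq_ite {d a : ℕ} (p : ℕ) (had : a < d) :
    deltaIn d p a = if ∃ i, 1 ≤ i ∧ i < a ∧ p * i % d = a then 1 else 0 := by
  have hd : (0 : ℚ) < d := by exact_mod_cast (a.zero_le.trans_lt had)
  have hfract : Int.fract ((a : ℚ) / d) = a / d := by
    rw [Int.fract_div_natCast_eq_div_natCast_mod, Nat.mod_eq_of_lt had]
  simp only [deltaIn, Nat.ModEq, Nat.mod_eq_of_lt had, hfract, div_lt_div_iff_of_pos_right hd,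
    Nat.cast_lt, and_comm]

lemma mul_mod_injOn_Iio {p d : ℕ} (hpd : p.Coprime d) :
    Set.InjOn (fun i => p * i % d) (Set.Iio d) := fun i hi j hj hij => by
  simpa only [Nat.ModEq, Nat.mod_eq_of_lt hi, Nat.mod_eq_of_lt hj] using
    Nat.ModEq.cancel_left_of_coprime hpd.symm hij

lemma card_filter_exists_mul_mod_eq {d p m : ℕ} (hpd : p.Coprime d) (hm : m < d) :
    #{a ∈ range (m + 1) | ∃ i, 1 ≤ i ∧ i < a ∧ p * i % d = a} =
      #{i ∈ Ico 1 m | i < p * i % d ∧ p * i % d ≤ m} := by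
  symm
  rw [← card_image_of_injOn ((mul_mod_injOn_Iio hpd).mono fun i hi => ?_)]
  · congr 1
    ext a
    simp only [mem_filter, mem_range, mem_Ico, mem_image]
    constructor
    · rintro ⟨i, ⟨⟨hi1, -⟩, hia, ham⟩, rfl⟩
      exact ⟨by omega, i, hi1, hia, rfl⟩
    · rintro ⟨ham, i, hi1, hia, rfl⟩
      exact ⟨i, ⟨⟨hi1, by omega⟩, hia, by omega⟩, rfl⟩
  · rw [mem_coe, mem_filter, mem_Ico] at hi
    exact Set.mem_Iio.2 (by omega)

lemma card_filter_natCast_fmap {R : Type} [AddMonoidWithOne R] [CharZero R] (s : Finset ℕ)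
    (P : R → Prop) [DecidablePred P] :
    #{x ∈ (Nat.cast <$> s : Finset R) | P x} = #(s.filter fun i : ℕ ↦ P i) := by
  -- `convert` rather than `rw`: the functor instance forms the image with a classical `DecidableEq`
  rw [fmap_def]
  convert card_image_of_injective (s.filter fun i : ℕ ↦ P i) (Nat.cast_injective (R := R)) using 2
  convert filter_image

theorem stmt12_general (d p : ℕ) (hp : p.Prime) (hpd : ¬ p ∣ d)
    (m : ℕ) (hm : m < d) :
    ∑ a ∈ Finset.range (m + 1), deltaIn d p a =
      (((Finset.Ico 1 m).filter (fun i =>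
        (i : ℚ) < d * Int.fract (((p : ℚ) * i) / d) ∧
        d * Int.fract (((p : ℚ) * i) / d) ≤ m)).card : ℤ) := by
  have hd : d ≠ 0 := by omega
  rw [sum_congr rfl fun a ha => deltaIn_eq_ite p ((mem_range_succ_iff.1 ha).trans_lt hm), sum_boole]
  -- on the right, `Ico 1 m` has been coerced to a `Finset ℚ` through the monad structure of `Finset`
  rw [bind_pure_comp, card_filter_natCast_fmap]
  simp only [← Nat.cast_mul, natCast_mul_fract_div_natCast hd, Nat.cast_lt, Nat.cast_le]
  exact_mod_cast card_filter_exists_mul_mod_eq (hp.coprime_iff_not_dvd.2 hpd) hm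

theorem stmt12 (d p : ℕ) (hd : 0 < d) (hp : p.Prime) (hpd : ¬ p ∣ d)
    (m : ℕ) (hm : m < d) :
    ∑ a ∈ Finset.range (m + 1), deltaIn d p a =
      (((Finset.Ico 1 m).filter (fun i =>
        (i : ℚ) < d * Int.fract (((p : ℚ) * i) / d) ∧
        d * Int.fract (((p : ℚ) * i) / d) ≤ m)).card : ℤ) :=
  stmt12_general d p hp hpd m hm
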